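/- Two-layer stride elimination (1-D): let y(n) = η(Σ_c (h^{(c)} *_{s} x^{(c)})(n)) and z(n) = (g *_{t} y)(n) for finitely supported filters g, h^{(c)} and inputs x^{(c)}, with η applied element-wise. Then z can be computed exactly by a two-layer network using only stride-one convolutions: z(n) = Σ_{r=0}^{t−1} (g_r * y_r)(n) where y_r(m) = y(t·m + r) and each y_r(m) = η(Σ_c Σ_{p=0}^{s−1} (h^{(c)}_{p,?} * x^{(c)}_p)(m)) for suitably subsampled filters h^{(c)}_{p,·} and polyphase inputs x^{(c)}_p. -/
import Mathlib

/-- Key reindexing lemma: a finite sum over ℤ can be split into polyphase components. -/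
lemma stride_split (N : ℕ) (hN : 1 ≤ N) (a : ℤ) (f : ℤ → ℝ)
    (hf : (Function.support f).Finite) :
    ∑ᶠ k : ℤ, f k =
      ∑ p ∈ Finset.range N, ∑ᶠ k : ℤ, f ((N : ℤ) * k + a - (p : ℤ)) := by
  classical
  have hNz : (N : ℤ) ≠ 0 := by positivity
  set S := hf.toFinset with hS
  set q : ℤ → ℕ := fun m => ((a - m) % N).toNat with hqdef
  have hq : ∀ m : ℤ, (q m : ℤ) = (a - m) % N := fun m =>
    Int.toNat_of_nonneg (Int.emod_nonneg _ hNz)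
  have hqlt : ∀ m : ℤ, ((a - m) % N) < N := fun m =>
    Int.emod_lt_of_pos _ (by positivity)
  have hmem : ∀ m ∈ S, q m ∈ Finset.range N := by
    intro m _
    rw [Finset.mem_range]
    have := hqlt m
    have := hq m
    omega
  rw [finsum_eq_sum f hf, ← Finset.sum_fiberwise_of_maps_to hmem f]
  apply Finset.sum_congr rfl
  intro p hp
  rw [Finset.mem_range] at hp
  -- fiber facts
  have hfiber : ∀ m : ℤ, q m = p ↔ (a - m) % N = (p : ℤ) := by
    intro m
    constructor
    · intro hm; rw [← hq m, hm]
    · intro hm; have := hq m; omega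
  -- the image finset
  set T : Finset ℤ :=
    (S.filter (fun m => q m = p)).image (fun m => (m - a + (p : ℤ)) / N) with hT
  have hinv : ∀ m : ℤ, q m = p →
      (N : ℤ) * ((m - a + (p : ℤ)) / N) + a - (p : ℤ) = m := by
    intro m hm
    have hdvd : (N : ℤ) ∣ (a - m) - (p : ℤ) :=
      Int.dvd_self_sub_of_emod_eq ((hfiber m).1 hm)
    obtain ⟨d, hd⟩ := hdvd
    have he : m - a + (p : ℤ) = (N : ℤ) * (-d) := by rw [mul_neg]; omega
    rw [he, Int.mul_ediv_cancel_left _ hNz, mul_neg]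
    omega
  have hsub : Function.support (fun k : ℤ => f ((N : ℤ) * k + a - (p : ℤ))) ⊆ (T : Set ℤ) := by
    intro k hk
    have hm : ((N : ℤ) * k + a - (p : ℤ)) ∈ S.filter (fun m => q m = p) := by
      rw [Finset.mem_filter]
      constructor
      · rw [hS, Set.Finite.mem_toFinset]; exact hk
      · rw [hfiber]
        have : a - ((N : ℤ) * k + a - (p : ℤ)) = (p : ℤ) - k * (N : ℤ) := by ring
        rw [this, sub_eq_add_neg, ← neg_mul, Int.add_mul_emod_self_right,
          Int.emod_eq_of_lt (by positivity) (by exact_mod_cast hp)]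
    have : ((N : ℤ) * k + a - (p : ℤ) - a + (p : ℤ)) / N = k := by
      have he : (N : ℤ) * k + a - (p : ℤ) - a + (p : ℤ) = (N : ℤ) * k := by ring
      rw [he, Int.mul_ediv_cancel_left _ hNz]
    rw [hT, Finset.coe_image]
    exact ⟨_, hm, this⟩
  rw [finsum_eq_finset_sum_of_support_subset _ hsub]
  apply Finset.sum_nbij' (i := fun m => (m - a + (p : ℤ)) / N)
      (j := fun k => (N : ℤ) * k + a - (p : ℤ))
  · intro m hm
    exact Finset.mem_image_of_mem _ hm
  · intro k hk
    rw [hT, Finset.mem_image] at hk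
    obtain ⟨m, hm, hkm⟩ := hk
    have hq' := (Finset.mem_filter.1 hm).2
    rw [← hkm, hinv m hq']
    exact hm
  · intro m hm
    exact hinv m (Finset.mem_filter.1 hm).2
  · intro k hk
    rw [hT, Finset.mem_image] at hk
    obtain ⟨m, hm, hkm⟩ := hk
    have he : (N : ℤ) * k + a - (p : ℤ) - a + (p : ℤ) = (N : ℤ) * k := by ring
    rw [he, Int.mul_ediv_cancel_left _ hNz]
  · intro m hm
    rw [hinv m (Finset.mem_filter.1 hm).2]

/-- Two-layer stride elimination (1-D): a strided two-layer all-convolutional network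
can be evaluated exactly by stride-one convolutions of polyphase components. -/
theorem two_layer_stride_elimination
    (C s t : ℕ) (hs : 1 ≤ s) (ht : 1 ≤ t) (η : ℝ → ℝ)
    (g : ℤ → ℝ) (h x : Fin C → ℤ → ℝ)
    (hg : (Function.support g).Finite)
    (hh : ∀ c, (Function.support (h c)).Finite)
    (hx : ∀ c, (Function.support (x c)).Finite)
    (y z : ℤ → ℝ)
    (hy : ∀ n : ℤ, y n = η (∑ c : Fin C, ∑ᶠ k : ℤ, h c k * x c ((s : ℤ) * n - k)))
    (hz : ∀ n : ℤ, z n = ∑ᶠ k : ℤ, g k * y ((t : ℤ) * n - k)) :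
    (∀ n : ℤ, z n =
        ∑ r ∈ Finset.range t,
          ∑ᶠ k : ℤ, g ((t : ℤ) * k - (r : ℤ)) * y ((t : ℤ) * (n - k) + (r : ℤ))) ∧
    (∀ (m r : ℤ), y ((t : ℤ) * m + r) =
        η (∑ c : Fin C, ∑ p ∈ Finset.range (s * t),
            ∑ᶠ k : ℤ,
              h c (((s * t : ℕ) : ℤ) * k + (s : ℤ) * r - (p : ℤ)) *
                x c (((s * t : ℕ) : ℤ) * (m - k) + (p : ℤ)))) := by
  constructor
  · intro n
    rw [hz n]
    have hfin : (Function.support (fun k : ℤ => g k * y ((t : ℤ) * n - k))).Finite := by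
      apply hg.subset
      intro k hk
      simp only [Function.mem_support] at hk ⊢
      exact fun hgk => hk (by rw [hgk, zero_mul])
    rw [stride_split t ht 0 _ hfin]
    apply Finset.sum_congr rfl
    intro r _
    apply finsum_congr
    intro k
    have h1 : (t : ℤ) * k + 0 - (r : ℤ) = (t : ℤ) * k - (r : ℤ) := by ring
    have h2 : (t : ℤ) * n - ((t : ℤ) * k + 0 - (r : ℤ)) = (t : ℤ) * (n - k) + (r : ℤ) := by ring
    rw [h1]
    congr 1
    rw [← h1, h2]
  · intro m r
    rw [hy]
    congr 1
    apply Finset.sum_congr rfl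
    intro c _
    have hst : 1 ≤ s * t := Nat.one_le_iff_ne_zero.mpr (by positivity)
    have hfin : (Function.support
        (fun k : ℤ => h c k * x c ((s : ℤ) * ((t : ℤ) * m + r) - k))).Finite := by
      apply (hh c).subset
      intro k hk
      simp only [Function.mem_support] at hk ⊢
      exact fun hgk => hk (by rw [hgk, zero_mul])
    rw [stride_split (s * t) hst ((s : ℤ) * r) _ hfin]
    apply Finset.sum_congr rfl
    intro p _
    apply finsum_congr
    intro k
    congr 1
    push_cast
    ring
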